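/- Let f(u) = u^α with α > 0. Then lim_{n→∞} Σ_{k=0}^{n−1} sqrt( D_f(k/n, (k+1)/n) ) = ∞, i.e., the sums of the square roots of the squared-increment variances over the uniform partitions of [0,1] diverge (this yields the almost-sure infinite variation on [0,1] of the Gaussian process with covariance K_f). -/

import Mathlib

open MeasureTheory Real Filter

/-- The kernel `K_f(s,t)`, with `x * log x = 0` at `x = 0` (automatic since `Real.log 0 = 0`). -/
noncomputable def Kf (f : ℝ → ℝ) (s t : ℝ) : ℝ :=
  2 * ∫ u in (0:ℝ)..(min s t),
    f u * ((s + t - 2*u) * Real.log (s + t - 2*u)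
      - (s - u) * Real.log (s - u) - (t - u) * Real.log (t - u))

/-- The increment functional `D_f(s,t) = K_f(t,t) - 2 K_f(s,t) + K_f(s,s)`,
equal to `E (ζ_t - ζ_s)^2` for a centered process with covariance `K_f`. -/
noncomputable def Df (f : ℝ → ℝ) (s t : ℝ) : ℝ :=
  Kf f t t - 2 * Kf f s t + Kf f s s


/-- Quantitative strict convexity of `x log x`. -/
lemma ent (x : ℝ) (h0 : 0 ≤ x) (h1 : x ≤ 1) :
    x^2/2 ≤ (1+x)*Real.log (1+x) + (1-x)*Real.log (1-x) := by
  set G : ℝ → ℝ := fun y => (1+y)*Real.log (1+y) + (1-y)*Real.log (1-y) - y^2/2 with hG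
  have key : ∀ y ∈ Set.Ioo (0:ℝ) 1,
      HasDerivAt G (Real.log (1+y) - Real.log (1-y) - y) y := by
    intro y hy
    have h1y : (1:ℝ)+y ≠ 0 := by nlinarith [hy.1]
    have h2y : (1:ℝ)-y ≠ 0 := by nlinarith [hy.2]
    have d1 : HasDerivAt (fun z : ℝ => 1+z) 1 y := by
      simpa using (hasDerivAt_id y).const_add (1:ℝ)
    have d2 : HasDerivAt (fun z : ℝ => 1-z) (-1) y := by
      simpa using (hasDerivAt_id y).const_sub (1:ℝ)
    have e1 : HasDerivAt (fun z : ℝ => (1+z)*Real.log (1+z))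
        (1 * Real.log (1+y) + (1+y) * (1/(1+y))) y := d1.mul (d1.log h1y)
    have e2 : HasDerivAt (fun z : ℝ => (1-z)*Real.log (1-z))
        ((-1) * Real.log (1-y) + (1-y) * ((-1)/(1-y))) y := d2.mul (d2.log h2y)
    have e3 : HasDerivAt (fun z : ℝ => z^2/2) y y := by
      simpa using ((hasDerivAt_pow 2 y).div_const 2)
    have : HasDerivAt G (1 * Real.log (1+y) + (1+y) * (1/(1+y))
        + ((-1) * Real.log (1-y) + (1-y) * ((-1)/(1-y))) - y) y := (e1.add e2).sub e3
    convert this using 1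
    field_simp
    ring
  have hGc : ContinuousOn G (Set.Icc 0 1) := by
    apply Continuous.continuousOn
    have l1 : Continuous fun y : ℝ => (1+y)*Real.log (1+y) :=
      Real.continuous_mul_log.comp (by continuity)
    have l2 : Continuous fun y : ℝ => (1-y)*Real.log (1-y) :=
      Real.continuous_mul_log.comp (by continuity)
    exact (l1.add l2).sub (by continuity)
  have hmono : MonotoneOn G (Set.Icc 0 1) := by
    apply monotoneOn_of_deriv_nonneg (convex_Icc 0 1) hGc
    · rw [interior_Icc]
      exact fun y hy => (key y hy).differentiableAt.differentiableWithinAt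
    · rw [interior_Icc]
      intro y hy
      rw [(key y hy).deriv]
      have hl1 : 0 ≤ Real.log (1+y) := Real.log_nonneg (by linarith [hy.1])
      have hl2 : Real.log (1-y) ≤ (1-y) - 1 :=
        Real.log_le_sub_one_of_pos (by linarith [hy.2])
      linarith
  have h00 : G 0 ≤ G x := by
    apply hmono (Set.mem_Icc.2 ⟨le_refl 0, zero_le_one⟩) (Set.mem_Icc.2 ⟨h0, h1⟩) h0
  have : G 0 = 0 := by simp [hG]
  rw [this] at h00
  simp only [hG] at h00
  linarith


lemma psi_lb (a b : ℝ) (ha : 0 ≤ a) (hab : a ≤ b) (hb : 0 < b) :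
    (b-a)^2/(2*(a+b)) ≤
      (2*b)*Real.log (2*b) + (2*a)*Real.log (2*a) - 2*((a+b)*Real.log (a+b)) := by
  have hab0 : 0 < a + b := by linarith
  have hne : a + b ≠ 0 := ne_of_gt hab0
  have hne' : b + a ≠ 0 := by rw [add_comm]; exact hne
  rcases eq_or_lt_of_le ha with h0 | h0
  · -- a = 0
    have ha0 : a = 0 := h0.symm
    subst ha0
    have hlb : Real.log (2*b) = Real.log 2 + Real.log b :=
      Real.log_mul (by norm_num) (ne_of_gt hb)
    have h2 : (0.6931471803 : ℝ) < Real.log 2 := Real.log_two_gt_d9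
    rw [hlb]
    have hsq : (b-0)^2/(2*(0+b)) = b/2 := by
      field_simp
      ring
    rw [hsq]
    simp only [mul_zero, zero_mul, Real.log_zero, zero_add]
    nlinarith
  · -- 0 < a
    set x : ℝ := (b-a)/(a+b) with hx
    have hx0 : 0 ≤ x := div_nonneg (by linarith) hab0.le
    have hx1 : x ≤ 1 := by
      rw [hx, div_le_one hab0]; linarith
    have h1x : 1 + x = 2*b/(a+b) := by rw [hx]; field_simp [hne']; ring
    have h2x : 1 - x = 2*a/(a+b) := by rw [hx]; field_simp [hne']; ring
    have key := ent x hx0 hx1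
    rw [h1x, h2x] at key
    rw [Real.log_div (by positivity) (ne_of_gt hab0),
        Real.log_div (by positivity) (ne_of_gt hab0)] at key
    have := mul_le_mul_of_nonneg_left key hab0.le
    calc (b-a)^2/(2*(a+b)) = (a+b) * (x^2/2) := by
          rw [hx]; field_simp [hne']
      _ ≤ (a+b) * (2*b/(a+b)*(Real.log (2*b) - Real.log (a+b))
            + 2*a/(a+b)*(Real.log (2*a) - Real.log (a+b))) := this
      _ = (2*b)*Real.log (2*b) + (2*a)*Real.log (2*a) - 2*((a+b)*Real.log (a+b)) := by
          field_simp [hne']; ring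

lemma psi_lb' (s t u : ℝ) (hu : u ≤ s) (hst : s < t) :
    (t-s)^2/(2*(s+t-2*u)) ≤
      (t+t-2*u)*Real.log (t+t-2*u) + (s+s-2*u)*Real.log (s+s-2*u)
        - 2*((s+t-2*u)*Real.log (s+t-2*u)) := by
  have h1 : t+t-2*u = 2*(t-u) := by ring
  have h2 : s+s-2*u = 2*(s-u) := by ring
  have h3 : s+t-2*u = (s-u)+(t-u) := by ring
  have h4 : t-s = (t-u)-(s-u) := by ring
  rw [h1, h2, h3, h4]
  exact psi_lb (s-u) (t-u) (by linarith) (by linarith) (by linarith)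

lemma Df_lb (α s t : ℝ) (hα : 0 < α) (hs : 0 < s) (hst : s < t) :
    (s/2)^α * (t-s)^2 * (Real.log t - Real.log (t-s)) / 2
      ≤ Df (fun u => u ^ α) s t := by
  have h0s : (0:ℝ) ≤ s := hs.le
  have hcf : Continuous fun u : ℝ => u ^ α := Real.continuous_rpow_const hα.le
  set f : ℝ → ℝ := fun u => u ^ α with hf
  set g1 : ℝ → ℝ := fun u => f u * ((t + t - 2*u) * Real.log (t + t - 2*u)
      - (t - u) * Real.log (t - u) - (t - u) * Real.log (t - u)) with hg1
  set g2 : ℝ → ℝ := fun u => f u * ((s + t - 2*u) * Real.log (s + t - 2*u)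
      - (s - u) * Real.log (s - u) - (t - u) * Real.log (t - u)) with hg2
  set g3 : ℝ → ℝ := fun u => f u * ((s + s - 2*u) * Real.log (s + s - 2*u)
      - (s - u) * Real.log (s - u) - (s - u) * Real.log (s - u)) with hg3
  have hL : ∀ c d : ℝ, Continuous fun u : ℝ => (c - d*u) * Real.log (c - d*u) := by
    intro c d
    exact Real.continuous_mul_log.comp (by continuity)
  have hcg1 : Continuous g1 := by
    apply hcf.mul
    have := ((hL (t+t) 2).sub (hL t 1)).sub (hL t 1)
    convert this using 1; funext u; simp
  have hcg2 : Continuous g2 := by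
    apply hcf.mul
    have := ((hL (s+t) 2).sub (hL s 1)).sub (hL t 1)
    convert this using 1; funext u; simp
  have hcg3 : Continuous g3 := by
    apply hcf.mul
    have := ((hL (s+s) 2).sub (hL s 1)).sub (hL s 1)
    convert this using 1; funext u; simp
  -- the combined integrand on [0,s]
  set ψ : ℝ → ℝ := fun u => f u * ((t+t-2*u)*Real.log (t+t-2*u)
      + (s+s-2*u)*Real.log (s+s-2*u) - 2*((s+t-2*u)*Real.log (s+t-2*u))) with hψ
  have hcψ : Continuous ψ := by
    apply hcf.mul
    have := ((hL (t+t) 2).add (hL (s+s) 2)).sub (continuous_const.mul (hL (s+t) 2) : Continuous fun u : ℝ => 2 * ((s+t-2*u)*Real.log (s+t-2*u)))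
    convert this using 1; funext u; simp
  -- identity: Df = 2 ∫_0^s ψ + 2 ∫_s^t g1
  have hsplit : (∫ u in (0:ℝ)..t, g1 u)
      = (∫ u in (0:ℝ)..s, g1 u) + ∫ u in s..t, g1 u :=
    (intervalIntegral.integral_add_adjacent_intervals
      (hcg1.intervalIntegrable 0 s) (hcg1.intervalIntegrable s t)).symm
  have hcomb : (∫ u in (0:ℝ)..s, g1 u) - 2 * (∫ u in (0:ℝ)..s, g2 u)
      + (∫ u in (0:ℝ)..s, g3 u) = ∫ u in (0:ℝ)..s, ψ u := by
    rw [← intervalIntegral.integral_const_mul,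
        ← intervalIntegral.integral_sub (g := fun u => 2 * g2 u) (hcg1.intervalIntegrable 0 s)
          ((continuous_const.mul hcg2 : Continuous fun u => 2 * g2 u).intervalIntegrable 0 s),
        ← intervalIntegral.integral_add (f := fun u => g1 u - 2 * g2 u)
          ((hcg1.sub (continuous_const.mul hcg2) : Continuous fun u => g1 u - 2 * g2 u).intervalIntegrable 0 s)
          (hcg3.intervalIntegrable 0 s)]
    congr 1
    funext u
    simp only [hg1, hg2, hg3, hψ, Pi.sub_apply, Pi.add_apply]
    ring
  have hDf : Df f s t = 2 * (∫ u in (0:ℝ)..s, ψ u) + 2 * ∫ u in s..t, g1 u := by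
    rw [Df, Kf, Kf, Kf, min_self, min_self, min_eq_left hst.le]
    change 2 * (∫ u in (0:ℝ)..t, g1 u) - 2 * (2 * ∫ u in (0:ℝ)..s, g2 u) + 2 * ∫ u in (0:ℝ)..s, g3 u = _
    rw [hsplit]
    have := hcomb
    ring_nf
    ring_nf at this
    linarith
  -- nonnegativity of the tail integral
  have hg1nonneg : 0 ≤ ∫ u in s..t, g1 u := by
    apply intervalIntegral.integral_nonneg hst.le
    intro u hu
    obtain ⟨hu1, hu2⟩ := hu
    have hu0 : (0:ℝ) ≤ u := le_trans h0s hu1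
    have hfu : 0 ≤ f u := Real.rpow_nonneg hu0 α
    rcases eq_or_lt_of_le hu2 with h | h
    · simp [hg1, h, show t+t-2*t = 0 by ring]
    · have hc : 0 < t - u := by linarith
      have he : g1 u = f u * (2*(t-u)*Real.log 2) := by
        simp only [hg1]
        rw [show t+t-2*u = 2*(t-u) by ring,
          Real.log_mul two_ne_zero (ne_of_gt hc)]
        ring
      rw [he]
      have hl2 : (0:ℝ) < Real.log 2 := Real.log_pos (by norm_num)
      have : (0:ℝ) ≤ 2*(t-u)*Real.log 2 := by positivity
      exact mul_nonneg hfu this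
  -- nonnegativity of ψ on [0, s/2]
  have hψ0 : 0 ≤ ∫ u in (0:ℝ)..(s/2), ψ u := by
    apply intervalIntegral.integral_nonneg (by linarith)
    intro u hu
    obtain ⟨hu1, hu2⟩ := hu
    have hus : u ≤ s := by linarith
    have hfu : 0 ≤ f u := Real.rpow_nonneg hu1 α
    have hd : 0 < s + t - 2*u := by linarith
    have hlow : (0:ℝ) ≤ (t-s)^2/(2*(s+t-2*u)) :=
      div_nonneg (sq_nonneg _) (by linarith)
    have := le_trans hlow (psi_lb' s t u hus hst)
    exact mul_nonneg hfu this
  have hsplit2 : (∫ u in (0:ℝ)..s, ψ u)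
      = (∫ u in (0:ℝ)..(s/2), ψ u) + ∫ u in (s/2)..s, ψ u :=
    (intervalIntegral.integral_add_adjacent_intervals
      (hcψ.intervalIntegrable 0 (s/2)) (hcψ.intervalIntegrable (s/2) s)).symm
  -- the minorant on [s/2, s]
  set C : ℝ := (s/2)^α * ((t-s)^2/2) with hC
  have hinvcont : ContinuousOn (fun u : ℝ => (s+t-2*u)⁻¹) (Set.uIcc (s/2) s) := by
    rw [Set.uIcc_of_le (by linarith : s/2 ≤ s)]
    apply ContinuousOn.inv₀ (Continuous.continuousOn (by continuity))
    intro u hu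
    have : 0 < s + t - 2*u := by
      obtain ⟨hu1, hu2⟩ := hu
      linarith
    exact ne_of_gt this
  have hmono2 : C * (∫ u in (s/2)..s, (s+t-2*u)⁻¹) ≤ ∫ u in (s/2)..s, ψ u := by
    rw [← intervalIntegral.integral_const_mul]
    apply intervalIntegral.integral_mono_on (by linarith : s/2 ≤ s)
      ((continuousOn_const.mul hinvcont).intervalIntegrable)
      (hcψ.intervalIntegrable (s/2) s)
    intro u hu
    obtain ⟨hu1, hu2⟩ := hu
    have hd : 0 < s + t - 2*u := by linarith
    have hu0 : (0:ℝ) ≤ u := by linarith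
    have h1 : C * (s+t-2*u)⁻¹ = (s/2)^α * ((t-s)^2/(2*(s+t-2*u))) := by
      rw [hC]; field_simp
    show C * (s+t-2*u)⁻¹ ≤ ψ u
    rw [h1]
    apply mul_le_mul
    · exact Real.rpow_le_rpow (by positivity) (by linarith) hα.le
    · exact psi_lb' s t u hu2 hst
    · exact div_nonneg (sq_nonneg _) (by linarith)
    · exact Real.rpow_nonneg hu0 α
  -- FTC computation
  have hFTC : (∫ u in (s/2)..s, (s+t-2*u)⁻¹)
      = (Real.log t - Real.log (t-s))/2 := by
    have hderiv : ∀ u ∈ Set.uIcc (s/2) s,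
        HasDerivAt (fun v => -(1/2) * Real.log (s+t-2*v)) (s+t-2*u)⁻¹ u := by
      intro u hu
      rw [Set.uIcc_of_le (by linarith : s/2 ≤ s)] at hu
      obtain ⟨hu1, hu2⟩ := hu
      have hd : 0 < s + t - 2*u := by linarith
      have d1 : HasDerivAt (fun v : ℝ => s+t-2*v) (-2) u := by
        simpa using ((hasDerivAt_id u).const_mul (2:ℝ)).const_sub (s+t)
      have d2 : HasDerivAt (fun v => -(1/2) * Real.log (s+t-2*v)) (-(1/2) * (-2 / (s+t-2*u))) u := (d1.log (ne_of_gt hd)).const_mul (-(1/2) : ℝ)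
      convert d2 using 1
      ring
    rw [intervalIntegral.integral_eq_sub_of_hasDerivAt hderiv
      (hinvcont.intervalIntegrable)]
    rw [show s+t-2*s = t-s by ring, show s+t-2*(s/2) = t by ring]
    ring
  rw [hFTC] at hmono2
  have hEq : (s/2)^α * (t-s)^2 * (Real.log t - Real.log (t-s)) / 2
      = 2 * (C * ((Real.log t - Real.log (t-s))/2)) := by
    rw [hC]; ring
  rw [hDf, hEq]
  linarith

lemma sqrt_tendsto_atTop : Tendsto Real.sqrt atTop atTop := by
  rw [tendsto_atTop_atTop]
  intro b
  refine ⟨max (b^2) 0, fun a ha => ?_⟩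
  calc b ≤ |b| := le_abs_self b
    _ = Real.sqrt (b^2) := (Real.sqrt_sq_eq_abs b).symm
    _ ≤ Real.sqrt a := Real.sqrt_le_sqrt (le_trans (le_max_left _ _) ha)

lemma main_bound (α : ℝ) (hα : 0 < α) (n : ℕ) (hn : 2 ≤ n) :
    Real.sqrt (((1:ℝ)/4)^α/2)/4 * Real.sqrt (Real.log ((n:ℝ)/2))
      ≤ ∑ k ∈ Finset.range n,
          Real.sqrt (Df (fun u => u ^ α) ((k:ℝ)/(n:ℝ)) (((k:ℝ)+1)/(n:ℝ))) := by
  have hA0 : (0:ℝ) < ((1:ℝ)/4) ^ α := Real.rpow_pos_of_pos (by norm_num) α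
  set A : ℝ := ((1:ℝ)/4) ^ α with hA
  set B : ℝ := Real.sqrt (A/2) with hB
  have hB0 : 0 < B := Real.sqrt_pos.2 (by positivity)
  set m : ℕ := (n+1)/2 with hm
  have hmn : m < n := by omega
  have hm1 : 1 ≤ m := by omega
  have hn0 : (0:ℝ) < n := by
    have : 0 < n := by omega
    exact_mod_cast this
  -- uniform per-term lower bound on Ico m n
  have hterm : ∀ k ∈ Finset.Ico m n,
      B * Real.sqrt (Real.log ((m:ℝ)+1)) / n
        ≤ Real.sqrt (Df (fun u => u ^ α) ((k:ℝ)/(n:ℝ)) (((k:ℝ)+1)/(n:ℝ))) := by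
    intro k hk
    rw [Finset.mem_Ico] at hk
    obtain ⟨hmk, hkn⟩ := hk
    have hk1 : 1 ≤ k := le_trans hm1 hmk
    have h2k : n ≤ 2*k := by omega
    have hkR : (1:ℝ) ≤ (k:ℝ) := by exact_mod_cast hk1
    set s : ℝ := (k:ℝ)/n with hs'
    set t : ℝ := ((k:ℝ)+1)/n with ht'
    have hs : 0 < s := div_pos (by linarith) hn0
    have hst : s < t := by
      rw [hs', ht', div_lt_div_iff₀ hn0 hn0]
      nlinarith
    have hDb := Df_lb α s t hα hs hst
    have hts : t - s = 1/n := by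
      rw [hs', ht']
      field_simp
      ring
    have hlog : Real.log t - Real.log (t-s) = Real.log ((k:ℝ)+1) := by
      rw [hts, ht', Real.log_div (by linarith) (ne_of_gt hn0),
        Real.log_div one_ne_zero (ne_of_gt hn0), Real.log_one]
      ring
    have hsge : (1:ℝ)/4 ≤ s/2 := by
      rw [hs']
      rw [div_le_div_iff₀ (by norm_num) (by norm_num : (0:ℝ) < 2)]
      rw [div_mul_eq_mul_div, le_div_iff₀ hn0]
      have h2kR : (n:ℝ) ≤ 2*(k:ℝ) := by exact_mod_cast h2k
      linarith
    have hlogk : 0 ≤ Real.log ((k:ℝ)+1) := Real.log_nonneg (by linarith)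
    rw [hlog, hts] at hDb
    have hAle : A * (1/(n:ℝ))^2 * Real.log ((k:ℝ)+1) / 2
        ≤ (s/2)^α * (1/(n:ℝ))^2 * Real.log ((k:ℝ)+1) / 2 := by
      have h1 : A ≤ (s/2)^α := by
        rw [hA]
        exact Real.rpow_le_rpow (by norm_num) hsge hα.le
      gcongr
    have hDb2 := le_trans hAle hDb
    have hval : Real.sqrt (A * (1/(n:ℝ))^2 * Real.log ((k:ℝ)+1) / 2)
        = B * Real.sqrt (Real.log ((k:ℝ)+1)) / n := by
      rw [show A * (1/(n:ℝ))^2 * Real.log ((k:ℝ)+1) / 2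
          = (A/2) * Real.log ((k:ℝ)+1) * (1/(n:ℝ))^2 by ring]
      rw [Real.sqrt_mul (by positivity) ((1/(n:ℝ))^2),
        Real.sqrt_sq (by positivity),
        Real.sqrt_mul (by positivity) (Real.log ((k:ℝ)+1)), hB]
      field_simp
    calc B * Real.sqrt (Real.log ((m:ℝ)+1)) / n
        ≤ B * Real.sqrt (Real.log ((k:ℝ)+1)) / n := by
          have hmkR : (m:ℝ) + 1 ≤ (k:ℝ) + 1 := by
            have : (m:ℝ) ≤ (k:ℝ) := by exact_mod_cast hmk
            linarith
          have := Real.sqrt_le_sqrt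
            (Real.log_le_log (by positivity) hmkR)
          gcongr
      _ = Real.sqrt (A * (1/(n:ℝ))^2 * Real.log ((k:ℝ)+1) / 2) := hval.symm
      _ ≤ Real.sqrt (Df (fun u => u ^ α) s t) := Real.sqrt_le_sqrt hDb2
  -- sum over the subrange
  have hsub : Finset.Ico m n ⊆ Finset.range n := by
    intro k hk
    rw [Finset.mem_Ico] at hk
    exact Finset.mem_range.2 hk.2
  have hsum1 : (∑ k ∈ Finset.Ico m n,
      Real.sqrt (Df (fun u => u ^ α) ((k:ℝ)/(n:ℝ)) (((k:ℝ)+1)/(n:ℝ))))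
      ≤ ∑ k ∈ Finset.range n,
          Real.sqrt (Df (fun u => u ^ α) ((k:ℝ)/(n:ℝ)) (((k:ℝ)+1)/(n:ℝ))) :=
    Finset.sum_le_sum_of_subset_of_nonneg hsub
      (fun k _ _ => Real.sqrt_nonneg _)
  have hsum2 : ((n-m:ℕ):ℝ) * (B * Real.sqrt (Real.log ((m:ℝ)+1)) / n)
      ≤ ∑ k ∈ Finset.Ico m n,
          Real.sqrt (Df (fun u => u ^ α) ((k:ℝ)/(n:ℝ)) (((k:ℝ)+1)/(n:ℝ))) := by
    have := Finset.card_nsmul_le_sum (Finset.Ico m n)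
      (fun k => Real.sqrt (Df (fun u => u ^ α) ((k:ℝ)/(n:ℝ)) (((k:ℝ)+1)/(n:ℝ))))
      (B * Real.sqrt (Real.log ((m:ℝ)+1)) / n) hterm
    rwa [Nat.card_Ico, nsmul_eq_mul] at this
  -- final arithmetic
  have hcard : (n:ℝ)/4 ≤ ((n-m:ℕ):ℝ) := by
    have h4 : n ≤ 4*(n-m) := by omega
    have : (n:ℝ) ≤ 4*((n-m:ℕ):ℝ) := by exact_mod_cast h4
    linarith
  have hmhalf : Real.sqrt (Real.log ((n:ℝ)/2)) ≤ Real.sqrt (Real.log ((m:ℝ)+1)) := by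
    apply Real.sqrt_le_sqrt
    apply Real.log_le_log (by positivity)
    have h2 : n ≤ 2*(m+1) := by omega
    have : (n:ℝ) ≤ 2*((m:ℝ)+1) := by exact_mod_cast h2
    linarith
  calc B/4 * Real.sqrt (Real.log ((n:ℝ)/2))
      ≤ B/4 * Real.sqrt (Real.log ((m:ℝ)+1)) := by gcongr
    _ = (n:ℝ)/4 * (B * Real.sqrt (Real.log ((m:ℝ)+1)) / n) := by
        field_simp
    _ ≤ ((n-m:ℕ):ℝ) * (B * Real.sqrt (Real.log ((m:ℝ)+1)) / n) := by
        apply mul_le_mul_of_nonneg_right hcard (by positivity)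
    _ ≤ ∑ k ∈ Finset.Ico m n,
          Real.sqrt (Df (fun u => u ^ α) ((k:ℝ)/(n:ℝ)) (((k:ℝ)+1)/(n:ℝ))) := hsum2
    _ ≤ _ := hsum1

theorem stmt_10 (α : ℝ) (hα : 0 < α) :
    Filter.Tendsto
      (fun n : ℕ => ∑ k ∈ Finset.range n,
        Real.sqrt (Df (fun u => u ^ α) ((k:ℝ)/(n:ℝ)) (((k:ℝ)+1)/(n:ℝ))))
      Filter.atTop Filter.atTop := by
  have hA0 : (0:ℝ) < ((1:ℝ)/4) ^ α := Real.rpow_pos_of_pos (by norm_num) α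
  have hB0 : (0:ℝ) < Real.sqrt (((1:ℝ)/4)^α/2) := Real.sqrt_pos.2 (by positivity)
  have ht : Tendsto (fun n : ℕ =>
      Real.sqrt (((1:ℝ)/4)^α/2)/4 * Real.sqrt (Real.log ((n:ℝ)/2))) atTop atTop := by
    apply Tendsto.const_mul_atTop (by positivity)
    exact sqrt_tendsto_atTop.comp (Real.tendsto_log_atTop.comp
      (tendsto_natCast_atTop_atTop.atTop_div_const (by norm_num)))
  apply tendsto_atTop_mono' atTop ?_ ht
  filter_upwards [eventually_ge_atTop 2] with n hn using main_bound α hα n hn
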